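/- arXiv:1903.02039 — 3 statements merged into one kernel-verified Lean document; each statement's English description precedes it below -/
import Mathlib

section
/- For a vector w ∈ ℝ³ and a symmetric traceless matrix U ∈ ℝ^{3×3}_{sym,0}, equality ½|w|² = (3/2)λ_max(w⊗w − U) holds if and only if U = w⊗w − (1/3)|w|² I₃. -/
open MeasureTheory Filter
noncomputable section

/-- Euclidean dot product. -/
def dot {n : ℕ} (a b : Fin n → ℝ) : ℝ := ∑ i, a i * b i

/-- Maximal eigenvalue of a matrix (supremum of its real eigenvalues). -/
def lambdaMax {n : ℕ} (M : Matrix (Fin n) (Fin n) ℝ) : ℝ :=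
  sSup {r : ℝ | ∃ v : Fin n → ℝ, v ≠ 0 ∧ M.mulVec v = r • v}

/-- Outer (tensor) product of vectors. -/
def outer {n : ℕ} (a b : Fin n → ℝ) : Matrix (Fin n) (Fin n) ℝ :=
  Matrix.of fun i j => a i * b j

/-! With `M = w⊗w − U`, which is symmetric with trace `|w|²`, the equation says
`λ_max(M) = tr M / 3`. The trace is the sum of the three eigenvalues, each at most `λ_max(M)`,
so equality forces all of them to equal `λ_max(M)`, i.e. `M` is a multiple of the identity. -/

open Matrix

theorem Matrix.setOf_exists_mulVec_eq_smul_eq_spectrum {K n : Type*} [Field K] [Fintype n]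
    [DecidableEq n] (M : Matrix n n K) :
    {r : K | ∃ v : n → K, v ≠ 0 ∧ M *ᵥ v = r • v} = spectrum K M := by
  ext r
  rw [Set.mem_ofPred_eq, ← spectrum_toLin', ← Module.End.hasEigenvalue_iff_mem_spectrum]
  constructor
  · rintro ⟨v, hv, hMv⟩
    exact Module.End.hasEigenvalue_of_hasEigenvector
      (Module.End.hasEigenvector_iff.mpr ⟨Module.End.mem_eigenspace_iff.mpr hMv, hv⟩)
  · intro hr
    obtain ⟨v, hv⟩ := hr.exists_hasEigenvector
    exact ⟨v, hv.2, Module.End.mem_eigenspace_iff.mp hv.1⟩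

theorem Matrix.IsHermitian.eq_smul_one_of_eigenvalues_eq {𝕜 n : Type*} [RCLike 𝕜] [Fintype n]
    [DecidableEq n] {M : Matrix n n 𝕜} (hM : M.IsHermitian) {c : ℝ}
    (h : ∀ i, hM.eigenvalues i = c) : M = c • (1 : Matrix n n 𝕜) := by
  have hdiag : diagonal (RCLike.ofReal ∘ hM.eigenvalues) = (c : 𝕜) • (1 : Matrix n n 𝕜) := by
    ext i j
    simp [diagonal_apply, one_apply, h]
  conv_lhs => rw [hM.spectral_theorem, hdiag, map_smul, map_one]
  exact (RCLike.real_smul_eq_coe_smul c 1).symm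

section lambdaMax

variable {n : ℕ} {M : Matrix (Fin n) (Fin n) ℝ}

theorem lambdaMax_eq_sSup_spectrum (M : Matrix (Fin n) (Fin n) ℝ) :
    lambdaMax M = sSup (spectrum ℝ M) := by
  rw [lambdaMax, setOf_exists_mulVec_eq_smul_eq_spectrum]

theorem lambdaMax_smul_one [NeZero n] (c : ℝ) :
    lambdaMax (c • 1 : Matrix (Fin n) (Fin n) ℝ) = c := by
  rw [lambdaMax_eq_sSup_spectrum, ← Algebra.algebraMap_eq_smul_one, spectrum.scalar_eq,
    csSup_singleton]

theorem Matrix.IsHermitian.eigenvalues_le_lambdaMax (hM : M.IsHermitian) (i : Fin n) :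
    hM.eigenvalues i ≤ lambdaMax M := by
  rw [lambdaMax_eq_sSup_spectrum]
  exact le_csSup (finite_real_spectrum (A := M)).bddAbove (hM.eigenvalues_mem_spectrum_real i)

theorem Matrix.IsHermitian.lambdaMax_eq_trace_div_card_iff [NeZero n] (hM : M.IsHermitian) :
    lambdaMax M = M.trace / n ↔ M = (M.trace / n) • 1 := by
  have hn : (n : ℝ) ≠ 0 := NeZero.ne _
  constructor
  · intro h
    have htrace : M.trace = ∑ i, hM.eigenvalues i := by simpa using hM.trace_eq_sum_eigenvalues
    have hsum : ∑ i, hM.eigenvalues i = ∑ _i : Fin n, lambdaMax M := by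
      rw [← htrace, Finset.sum_const, Finset.card_univ,
        Fintype.card_fin, nsmul_eq_mul, h, mul_div_cancel₀ _ hn]
    have heig := (Finset.sum_eq_sum_iff_of_le fun i _ => hM.eigenvalues_le_lambdaMax i).mp hsum
    rw [← h]
    exact hM.eq_smul_one_of_eigenvalues_eq fun i => heig i (Finset.mem_univ i)
  · intro h
    rw [h, lambdaMax_smul_one, trace_smul, trace_one, Fintype.card_fin, smul_eq_mul,
      mul_div_cancel_right₀ _ hn]

end lambdaMax

/-- Equality `½|w|² = (3/2) λ_max(w⊗w − U)` holds for a symmetric traceless `U`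
if and only if `U = w⊗w − (1/3)|w|² I₃`. -/
theorem half_normSq_eq_lambdaMax_iff
    (w : Fin 3 → ℝ) (U : Matrix (Fin 3) (Fin 3) ℝ)
    (hUsymm : U.IsSymm) (hUtrace : U.trace = 0) :
    (1 / 2) * dot w w = (3 / 2) * lambdaMax (outer w w - U) ↔
      U = outer w w - ((1 / 3) * dot w w) • (1 : Matrix (Fin 3) (Fin 3) ℝ) := by
  have hM : (outer w w - U).IsHermitian :=
    isHermitian_iff_isSymm.mpr (IsSymm.sub (transpose_vecMulVec w w) hUsymm)
  have htrace : (outer w w - U).trace = dot w w := by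
    rw [trace_sub, hUtrace, sub_zero]
    exact trace_vecMulVec w w
  have key := hM.lambdaMax_eq_trace_div_card_iff
  rw [htrace, Nat.cast_ofNat] at key
  rw [eq_sub_iff_add_eq', ← eq_sub_iff_add_eq, eq_comm (b := outer w w - U),
    one_div_mul_eq_div (3 : ℝ), ← key]
  constructor <;> intro h <;> linarith
end
end

section
/- Let w ∈ ℝ³, U ∈ ℝ^{3×3}_{sym,0}, and let e, r, ē be real numbers with r > 0 and 0 ≤ e ≤ ē. If (3/2)λ_max[(w⊗w)/r − U] < e, then |w|² < 2 r ē; in particular |w| ≤ √(2 r̄ ē) whenever r ≤ r̄. -/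
open MeasureTheory Filter
noncomputable section

/-!
The trace of a symmetric matrix is the sum of its eigenvalues, hence at most `3 λ_max` in
dimension 3. Since `U` is traceless, `tr((w⊗w)/r − U) = |w|²/r`, so
`|w|²/r ≤ 3 λ_max[(w⊗w)/r − U] < 2e ≤ 2ē`.
-/

lemma dot_self_nonneg {n : ℕ} (w : Fin n → ℝ) : 0 ≤ dot w w :=
  Finset.sum_nonneg fun i _ => mul_self_nonneg (w i)

namespace Matrix

variable {n : ℕ}

lemma bddAbove_real_eigenvalues (M : Matrix (Fin n) (Fin n) ℝ) :
    BddAbove {r : ℝ | ∃ v : Fin n → ℝ, v ≠ 0 ∧ M.mulVec v = r • v} :=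
  (Module.End.finite_hasEigenvalue (toLin' M)).bddAbove.mono fun _ ⟨_, hv0, hv⟩ =>
    Module.End.hasEigenvalue_of_hasEigenvector
      (Module.End.hasEigenvector_iff.mpr ⟨Module.End.mem_eigenspace_iff.mpr hv, hv0⟩)

lemma IsHermitian.eigenvalues_le_lambdaMax_s7 {M : Matrix (Fin n) (Fin n) ℝ} (hM : M.IsHermitian)
    (i : Fin n) : hM.eigenvalues i ≤ lambdaMax M :=
  le_csSup (bddAbove_real_eigenvalues M)
    ⟨_, (WithLp.ofLp_eq_zero 2).ne.2 <| hM.eigenvectorBasis.orthonormal.ne_zero i,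
      hM.mulVec_eigenvectorBasis i⟩

lemma IsHermitian.trace_le_mul_lambdaMax {M : Matrix (Fin n) (Fin n) ℝ} (hM : M.IsHermitian) :
    M.trace ≤ n * lambdaMax M :=
  calc M.trace = ∑ i, hM.eigenvalues i := by simpa using hM.trace_eq_sum_eigenvalues
    _ ≤ ∑ _i : Fin n, lambdaMax M := Finset.sum_le_sum fun i _ => hM.eigenvalues_le_lambdaMax_s7 i
    _ = n * lambdaMax M := by simp

lemma isHermitian_outer_self (w : Fin n → ℝ) : (outer w w).IsHermitian := by
  ext i j
  simp [outer, mul_comm]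

lemma trace_outer_self (w : Fin n → ℝ) : (outer w w).trace = dot w w := rfl

end Matrix

theorem subsolution_pointwise_bound_general
    (w : Fin 3 → ℝ) (U : Matrix (Fin 3) (Fin 3) ℝ)
    (hUsymm : U.IsSymm) (hUtrace : U.trace = 0)
    (e r ebar : ℝ) (hr : 0 < r) (he : e ≤ ebar)
    (hsub : (3 / 2) * lambdaMax ((r⁻¹ • outer w w) - U) < e) :
    dot w w < 2 * r * ebar ∧
      ∀ rbar : ℝ, r ≤ rbar → Real.sqrt (dot w w) ≤ Real.sqrt (2 * rbar * ebar) := by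
  have hHerm : ((r⁻¹ • outer w w) - U).IsHermitian :=
    ((Matrix.isHermitian_outer_self w).smul (IsSelfAdjoint.all r⁻¹)).sub
      (Matrix.isHermitian_iff_isSymm.mpr hUsymm)
  have htrace : ((r⁻¹ • outer w w) - U).trace = r⁻¹ * dot w w := by
    simp [Matrix.trace_sub, Matrix.trace_smul, hUtrace, Matrix.trace_outer_self]
  have hbound : dot w w < 2 * r * ebar := by
    have htrace_le := hHerm.trace_le_mul_lambdaMax
    rw [htrace, inv_mul_le_iff₀ hr] at htrace_le
    push_cast at htrace_le
    nlinarith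
  have hebar : 0 ≤ ebar := by nlinarith [dot_self_nonneg w]
  exact ⟨hbound, fun rbar hrbar => Real.sqrt_le_sqrt (by nlinarith)⟩

/-- If `(3/2) λ_max[(w⊗w)/r − U] < e` with `U` symmetric traceless, `r > 0` and
`0 ≤ e ≤ ē`, then `|w|² < 2 r ē`; in particular `|w| ≤ √(2 r̄ ē)` whenever `r ≤ r̄`. -/
theorem subsolution_pointwise_bound
    (w : Fin 3 → ℝ) (U : Matrix (Fin 3) (Fin 3) ℝ)
    (hUsymm : U.IsSymm) (hUtrace : U.trace = 0)
    (e r ebar : ℝ) (hr : 0 < r) (he0 : 0 ≤ e) (he : e ≤ ebar)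
    (hsub : (3 / 2) * lambdaMax ((r⁻¹ • outer w w) - U) < e) :
    dot w w < 2 * r * ebar ∧
      ∀ rbar : ℝ, r ≤ rbar → Real.sqrt (dot w w) ≤ Real.sqrt (2 * rbar * ebar) :=
  subsolution_pointwise_bound_general w U hUsymm hUtrace e r ebar hr he hsub
end
end

section
/- Let ρ, θ, b : [0,T]×ℝ² → ℝ and u = (u₁,u₂) : [0,T]×ℝ² → ℝ² be smooth functions of (t, x₁, x₂) solving the two-dimensional system ∂ₜρ + div(ρu) = 0, ∂ₜ(ρu) + div(ρu⊗u) + ∇(ρθ + ½b²) = 0, ∂ₜb + div(bu) = Δb, c_V[∂ₜ(ρθ) + div(ρθu)] = Δθ − ρθ div u + |∇b|². Define, for x = (x₁,x₂,x₃), the fields v(t,x) := (u₁(t,x₁,x₂), u₂(t,x₁,x₂), 0), ϱ(t,x) := ρ(t,x₁,x₂), ϑ(t,x) := θ(t,x₁,x₂), and B(t,x) := (0, 0, b(t,x₁,x₂)). Then [ϱ, v, B, ϑ] solves the three-dimensional heat-conductive MHD system ∂ₜϱ + div_x(ϱv) = 0, ∂ₜ(ϱv) + div_x(ϱv⊗v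 − B⊗B) + ∇_x(ϱϑ + ½|B|²) = 0, ∂ₜB = curl_x(v×B) + ΔB, div_x B = 0, c_V[∂ₜ(ϱϑ) + div_x(ϱϑv)] = Δϑ − ϱϑ div_x v + |curl_x B|². -/
noncomputable section

/-- Partial derivative in the `i`-th coordinate direction. -/
def pd {n : ℕ} (i : Fin n) (f : (Fin n → ℝ) → ℝ) (x : Fin n → ℝ) : ℝ :=
  fderiv ℝ f x (Pi.single i 1)

/-- Divergence of a vector field. -/
def divg {n : ℕ} (v : (Fin n → ℝ) → (Fin n → ℝ)) (x : Fin n → ℝ) : ℝ :=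
  ∑ i, pd i (fun y => v y i) x

/-- Gradient. -/
def grad {n : ℕ} (f : (Fin n → ℝ) → ℝ) (x : Fin n → ℝ) : Fin n → ℝ := fun i => pd i f x

/-- Laplacian. -/
def lap {n : ℕ} (f : (Fin n → ℝ) → ℝ) (x : Fin n → ℝ) : ℝ := ∑ i, pd i (pd i f) x

/-- Cross product in ℝ³. -/
def cross (a b : Fin 3 → ℝ) : Fin 3 → ℝ :=
  ![a 1 * b 2 - a 2 * b 1, a 2 * b 0 - a 0 * b 2, a 0 * b 1 - a 1 * b 0]

/-- Curl of a vector field in ℝ³. -/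
def curl (v : (Fin 3 → ℝ) → (Fin 3 → ℝ)) (x : Fin 3 → ℝ) : Fin 3 → ℝ :=
  ![pd 1 (fun y => v y 2) x - pd 2 (fun y => v y 1) x,
    pd 2 (fun y => v y 0) x - pd 0 (fun y => v y 2) x,
    pd 0 (fun y => v y 1) x - pd 1 (fun y => v y 0) x]

/-- Projection `(x₁,x₂,x₃) ↦ (x₁,x₂)`. -/
def pr (x : Fin 3 → ℝ) : Fin 2 → ℝ := ![x 0, x 1]

/-- Lift of a scalar planar field to ℝ³ (constant in `x₃`). -/
def liftS (f : ℝ → (Fin 2 → ℝ) → ℝ) : ℝ → (Fin 3 → ℝ) → ℝ :=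
  fun t x => f t (pr x)

/-- Lift of a planar velocity field: `v = (u₁, u₂, 0)`. -/
def liftV (u : ℝ → (Fin 2 → ℝ) → Fin 2 → ℝ) : ℝ → (Fin 3 → ℝ) → Fin 3 → ℝ :=
  fun t x => ![u t (pr x) 0, u t (pr x) 1, 0]

/-- Lift of the out-of-plane magnetic field: `B = (0, 0, b)`. -/
def liftB (b : ℝ → (Fin 2 → ℝ) → ℝ) : ℝ → (Fin 3 → ℝ) → Fin 3 → ℝ :=
  fun t x => ![0, 0, b t (pr x)]

def prL : (Fin 3 → ℝ) →L[ℝ] (Fin 2 → ℝ) :=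
  ContinuousLinearMap.pi (fun i : Fin 2 => ContinuousLinearMap.proj (Fin.castSucc i))

lemma pr_eq (x : Fin 3 → ℝ) : pr x = prL x := by
  funext j; fin_cases j <;> rfl

lemma prL_single0 : prL (Pi.single (0 : Fin 3) (1:ℝ)) = Pi.single (0 : Fin 2) 1 := by
  funext j; fin_cases j <;> simp [prL, Pi.single_apply]

lemma prL_single1 : prL (Pi.single (1 : Fin 3) (1:ℝ)) = Pi.single (1 : Fin 2) 1 := by
  funext j; fin_cases j <;> simp [prL, Pi.single_apply]

lemma prL_single2 : prL (Pi.single (2 : Fin 3) (1:ℝ)) = 0 := by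
  funext j; fin_cases j <;> simp [prL, Pi.single_apply]

lemma fderiv_lift {g : (Fin 2 → ℝ) → ℝ} {F : (Fin 3 → ℝ) → ℝ}
    (hF : ∀ y, F y = g (pr y)) (hg : Differentiable ℝ g) (x : Fin 3 → ℝ) (v : Fin 3 → ℝ) :
    fderiv ℝ F x v = fderiv ℝ g (pr x) (prL v) := by
  have h1 : F = g ∘ prL := by funext y; rw [hF y, pr_eq]; rfl
  rw [h1, pr_eq, fderiv_comp x (hg _) (prL.differentiableAt)]
  simp

lemma pd_lift0 {g : (Fin 2 → ℝ) → ℝ} {F : (Fin 3 → ℝ) → ℝ}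
    (hF : ∀ y, F y = g (pr y)) (hg : Differentiable ℝ g) (x : Fin 3 → ℝ) :
    pd 0 F x = pd 0 g (pr x) := by
  rw [pd, pd, fderiv_lift hF hg, prL_single0]

lemma pd_lift1 {g : (Fin 2 → ℝ) → ℝ} {F : (Fin 3 → ℝ) → ℝ}
    (hF : ∀ y, F y = g (pr y)) (hg : Differentiable ℝ g) (x : Fin 3 → ℝ) :
    pd 1 F x = pd 1 g (pr x) := by
  rw [pd, pd, fderiv_lift hF hg, prL_single1]

lemma pd_lift2 {g : (Fin 2 → ℝ) → ℝ} {F : (Fin 3 → ℝ) → ℝ}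
    (hF : ∀ y, F y = g (pr y)) (hg : Differentiable ℝ g) (x : Fin 3 → ℝ) :
    pd 2 F x = 0 := by
  rw [pd, fderiv_lift hF hg, prL_single2]
  simp

lemma pd_const_zero {n : ℕ} (i : Fin n) (x : Fin n → ℝ) : pd i (fun _ => (0:ℝ)) x = 0 := by
  simp [pd]

lemma pd_congr {n : ℕ} {i : Fin n} {f g : (Fin n → ℝ) → ℝ} (h : ∀ y, f y = g y) (x : Fin n → ℝ) :
    pd i f x = pd i g x := by rw [funext h]

lemma pd_neg {n : ℕ} (i : Fin n) (f : (Fin n → ℝ) → ℝ) (x : Fin n → ℝ) :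
    pd i (fun y => -(f y)) x = - pd i f x := by
  simp [pd]

lemma contDiff_pd {n : ℕ} (i : Fin n) {g : (Fin n → ℝ) → ℝ} (hg : ContDiff ℝ (⊤ : ℕ∞) g) :
    ContDiff ℝ (⊤ : ℕ∞) (pd i g) := by
  have h := hg.fderiv_right (m := (⊤ : ℕ∞)) (by simp)
  exact (ContinuousLinearMap.apply ℝ ℝ (Pi.single i (1:ℝ))).contDiff.comp h

lemma lap_lift {g : (Fin 2 → ℝ) → ℝ} {F : (Fin 3 → ℝ) → ℝ}
    (hF : ∀ y, F y = g (pr y)) (hg : ContDiff ℝ (⊤ : ℕ∞) g) (x : Fin 3 → ℝ) :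
    lap F x = lap g (pr x) := by
  have hgd := hg.differentiable (by simp)
  unfold lap
  rw [Fin.sum_univ_three, Fin.sum_univ_two]
  have h0 : pd 0 (pd 0 F) x = pd 0 (pd 0 g) (pr x) :=
    pd_lift0 (fun y => pd_lift0 hF hgd y) ((contDiff_pd 0 hg).differentiable (by simp)) x
  have h1 : pd 1 (pd 1 F) x = pd 1 (pd 1 g) (pr x) :=
    pd_lift1 (fun y => pd_lift1 hF hgd y) ((contDiff_pd 1 hg).differentiable (by simp)) x
  have h2 : pd 2 (pd 2 F) x = 0 := by
    have : pd 2 F = fun _ => (0:ℝ) := funext fun y => pd_lift2 hF hgd y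
    rw [this]; simp [pd]
  rw [h0, h1, h2, add_zero]

lemma sliceS {f : ℝ → (Fin 2 → ℝ) → ℝ} (hf : ContDiff ℝ (⊤ : ℕ∞) (Function.uncurry f)) (t : ℝ) :
    ContDiff ℝ (⊤ : ℕ∞) (f t) :=
  hf.comp (contDiff_const.prodMk contDiff_id)

lemma sliceV {u : ℝ → (Fin 2 → ℝ) → Fin 2 → ℝ} (hu : ContDiff ℝ (⊤ : ℕ∞) (Function.uncurry u))
    (t : ℝ) (i : Fin 2) : ContDiff ℝ (⊤ : ℕ∞) (fun z => u t z i) := by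
  have h : ContDiff ℝ (⊤ : ℕ∞) (u t) := hu.comp (contDiff_const.prodMk contDiff_id)
  exact contDiff_pi.mp h i

lemma cons3_zero (a b c : ℝ) : ![a,b,c] 0 = a := rfl
lemma cons3_one (a b c : ℝ) : ![a,b,c] 1 = b := rfl
lemma cons3_two (a b c : ℝ) : ![a,b,c] 2 = c := rfl
lemma cons2_zero (a b : ℝ) : ![a,b] 0 = a := rfl
lemma cons2_one (a b : ℝ) : ![a,b] 1 = b := rfl

lemma lap_congr {n : ℕ} {f g : (Fin n → ℝ) → ℝ} (h : ∀ y, f y = g y) (x : Fin n → ℝ) :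
    lap f x = lap g x := by rw [funext h]

lemma lap_zero {n : ℕ} (x : Fin n → ℝ) : lap (fun _ => (0:ℝ)) x = 0 := by
  have h : ∀ i : Fin n, pd i (fun _ => (0:ℝ)) = fun _ => (0:ℝ) := by
    intro i; funext y; simp [pd]
  simp only [lap, h]
  simp [pd]

/-- **Symmetry reduction.** Every smooth solution `[ρ, u, b, θ]` of the 2-D
symmetry-reduced heat-conductive MHD system lifts, via
`v := (u₁,u₂,0)`, `B := (0,0,b)` and `x₃`-independent `ϱ`, `ϑ`, to a solution of the
3-D heat-conductive MHD system
`∂ₜϱ + div(ϱv) = 0`, `∂ₜ(ϱv) + div(ϱv⊗v − B⊗B) + ∇(ϱϑ + ½|B|²) = 0`,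
`∂ₜB = curl(v×B) + ΔB`, `div B = 0`,
`c_V[∂ₜ(ϱϑ) + div(ϱϑv)] = Δϑ − ϱϑ div v + |curl B|²`. -/
theorem two_dim_solution_lifts_to_three_dim
    (T : ℝ) (hT : 0 < T) (cV : ℝ) (hcV : 0 < cV)
    (ρ b θ : ℝ → (Fin 2 → ℝ) → ℝ) (u : ℝ → (Fin 2 → ℝ) → Fin 2 → ℝ)
    (hρ : ContDiff ℝ (⊤ : ℕ∞) (Function.uncurry ρ))
    (hb : ContDiff ℝ (⊤ : ℕ∞) (Function.uncurry b))
    (hθ : ContDiff ℝ (⊤ : ℕ∞) (Function.uncurry θ))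
    (hu : ContDiff ℝ (⊤ : ℕ∞) (Function.uncurry u))
    -- the 2-D continuity equation
    (heq1 : ∀ t ∈ Set.Icc 0 T, ∀ x : Fin 2 → ℝ,
      deriv (fun s => ρ s x) t + divg (fun y i => ρ t y * u t y i) x = 0)
    -- the 2-D momentum equation
    (heq2 : ∀ t ∈ Set.Icc 0 T, ∀ x : Fin 2 → ℝ, ∀ i : Fin 2,
      deriv (fun s => ρ s x * u s x i) t
        + (∑ j, pd j (fun y => ρ t y * u t y i * u t y j) x)
        + pd i (fun y => ρ t y * θ t y + (1 / 2) * (b t y) ^ 2) x = 0)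
    -- the 2-D induction equation
    (heq3 : ∀ t ∈ Set.Icc 0 T, ∀ x : Fin 2 → ℝ,
      deriv (fun s => b s x) t + divg (fun y i => b t y * u t y i) x = lap (b t) x)
    -- the 2-D internal energy equation
    (heq4 : ∀ t ∈ Set.Icc 0 T, ∀ x : Fin 2 → ℝ,
      cV * (deriv (fun s => ρ s x * θ s x) t
          + divg (fun y i => ρ t y * θ t y * u t y i) x)
        = lap (θ t) x - ρ t x * θ t x * divg (u t) x
          + dot (grad (b t) x) (grad (b t) x)) :
    -- the lifted fields solve the 3-D heat-conductive MHD system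
    (∀ t ∈ Set.Icc 0 T, ∀ x : Fin 3 → ℝ,
      deriv (fun s => liftS ρ s x) t
        + divg (fun y i => liftS ρ t y * liftV u t y i) x = 0) ∧
    (∀ t ∈ Set.Icc 0 T, ∀ x : Fin 3 → ℝ, ∀ i : Fin 3,
      deriv (fun s => liftS ρ s x * liftV u s x i) t
        + (∑ j, pd j (fun y =>
            liftS ρ t y * liftV u t y i * liftV u t y j
              - liftB b t y i * liftB b t y j) x)
        + pd i (fun y =>
            liftS ρ t y * liftS θ t y
              + (1 / 2) * dot (liftB b t y) (liftB b t y)) x = 0) ∧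
    (∀ t ∈ Set.Icc 0 T, ∀ x : Fin 3 → ℝ, ∀ i : Fin 3,
      deriv (fun s => liftB b s x i) t =
        curl (fun y => cross (liftV u t y) (liftB b t y)) x i
          + lap (fun y => liftB b t y i) x) ∧
    (∀ t ∈ Set.Icc 0 T, ∀ x : Fin 3 → ℝ, divg (liftB b t) x = 0) ∧
    (∀ t ∈ Set.Icc 0 T, ∀ x : Fin 3 → ℝ,
      cV * (deriv (fun s => liftS ρ s x * liftS θ s x) t
          + divg (fun y i => liftS ρ t y * liftS θ t y * liftV u t y i) x)
        = lap (fun y => liftS θ t y) x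
            - liftS ρ t x * liftS θ t x * divg (liftV u t) x
            + dot (curl (liftB b t) x) (curl (liftB b t) x)) := by
  refine ⟨?_, ?_, ?_, ?_, ?_⟩
  · intro t ht x
    have hR := sliceS hρ t
    have key := heq1 t ht (pr x)
    have hdiv : divg (fun y i => liftS ρ t y * liftV u t y i) x
        = divg (fun y i => ρ t y * u t y i) (pr x) := by
      unfold divg
      rw [Fin.sum_univ_three, Fin.sum_univ_two]
      rw [pd_lift0 (g := fun z => ρ t z * u t z 0)
        (fun y => by simp [liftS, liftV]) ((hR.mul (sliceV hu t 0)).differentiable (by simp)) x]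
      rw [pd_lift1 (g := fun z => ρ t z * u t z 1)
        (fun y => by simp [liftS, liftV]) ((hR.mul (sliceV hu t 1)).differentiable (by simp)) x]
      rw [pd_lift2 (g := fun _ => (0:ℝ))
        (fun y => by simp [liftS, liftV]) (differentiable_const 0) x]
      ring
    rw [hdiv]
    exact key
  · intro t ht x i
    have hR := sliceS hρ t
    have hBc := sliceS hb t
    have hΘ := sliceS hθ t
    have hU0 := sliceV hu t 0
    have hU1 := sliceV hu t 1
    have hPd : Differentiable ℝ (fun z => ρ t z * θ t z + (1 / 2) * (b t z) ^ 2) :=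
      ((hR.mul hΘ).add (contDiff_const.mul (hBc.pow 2))).differentiable (by simp)
    fin_cases i
    · -- i = 0
      show deriv (fun s => liftS ρ s x * liftV u s x 0) t
          + (∑ j, pd j (fun y =>
              liftS ρ t y * liftV u t y 0 * liftV u t y j
                - liftB b t y 0 * liftB b t y j) x)
          + pd (0 : Fin 3) (fun y =>
              liftS ρ t y * liftS θ t y
                + (1 / 2) * dot (liftB b t y) (liftB b t y)) x = 0
      have key := heq2 t ht (pr x) 0
      rw [Fin.sum_univ_two] at key
      rw [Fin.sum_univ_three]
      have hder : deriv (fun s => liftS ρ s x * liftV u s x 0) t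
          = deriv (fun s => ρ s (pr x) * u s (pr x) 0) t := rfl
      rw [hder]
      rw [pd_lift0 (g := fun z => ρ t z * u t z 0 * u t z 0)
          (fun y => by simp [liftS, liftV, liftB]; try ring)
          (((hR.mul hU0).mul hU0).differentiable (by simp)) x]
      rw [pd_lift1 (g := fun z => ρ t z * u t z 0 * u t z 1)
          (fun y => by simp [liftS, liftV, liftB]; try ring)
          (((hR.mul hU0).mul hU1).differentiable (by simp)) x]
      rw [pd_congr (g := fun _ => (0:ℝ)) (fun y => by simp [liftS, liftV, liftB]) x, pd_const_zero]
      rw [pd_lift0 (g := fun z => ρ t z * θ t z + (1 / 2) * (b t z) ^ 2)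
          (fun y => by
            simp [liftS, liftB, dot, Fin.sum_univ_three, cons3_zero, cons3_one, cons3_two]
            ring) hPd x]
      linarith [key]
    · -- i = 1
      show deriv (fun s => liftS ρ s x * liftV u s x 1) t
          + (∑ j, pd j (fun y =>
              liftS ρ t y * liftV u t y 1 * liftV u t y j
                - liftB b t y 1 * liftB b t y j) x)
          + pd (1 : Fin 3) (fun y =>
              liftS ρ t y * liftS θ t y
                + (1 / 2) * dot (liftB b t y) (liftB b t y)) x = 0
      have key := heq2 t ht (pr x) 1
      rw [Fin.sum_univ_two] at key
      rw [Fin.sum_univ_three]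
      have hder : deriv (fun s => liftS ρ s x * liftV u s x 1) t
          = deriv (fun s => ρ s (pr x) * u s (pr x) 1) t := rfl
      rw [hder]
      rw [pd_lift0 (g := fun z => ρ t z * u t z 1 * u t z 0)
          (fun y => by simp [liftS, liftV, liftB]; try ring)
          (((hR.mul hU1).mul hU0).differentiable (by simp)) x]
      rw [pd_lift1 (g := fun z => ρ t z * u t z 1 * u t z 1)
          (fun y => by simp [liftS, liftV, liftB]; try ring)
          (((hR.mul hU1).mul hU1).differentiable (by simp)) x]
      rw [pd_congr (g := fun _ => (0:ℝ)) (fun y => by simp [liftS, liftV, liftB]) x, pd_const_zero]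
      rw [pd_lift1 (g := fun z => ρ t z * θ t z + (1 / 2) * (b t z) ^ 2)
          (fun y => by
            simp [liftS, liftB, dot, Fin.sum_univ_three, cons3_zero, cons3_one, cons3_two]
            ring) hPd x]
      linarith [key]
    · -- i = 2
      show deriv (fun s => liftS ρ s x * liftV u s x 2) t
          + (∑ j, pd j (fun y =>
              liftS ρ t y * liftV u t y 2 * liftV u t y j
                - liftB b t y 2 * liftB b t y j) x)
          + pd (2 : Fin 3) (fun y =>
              liftS ρ t y * liftS θ t y
                + (1 / 2) * dot (liftB b t y) (liftB b t y)) x = 0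
      have hder : (fun s => liftS ρ s x * liftV u s x 2) = fun _ => (0:ℝ) := by
        funext s; simp [liftS, liftV]
      rw [hder, deriv_const, Fin.sum_univ_three]
      rw [pd_congr (g := fun _ => (0:ℝ)) (fun y => by simp [liftS, liftV, liftB]) x, pd_const_zero]
      rw [pd_congr (g := fun _ => (0:ℝ)) (fun y => by simp [liftS, liftV, liftB]) x, pd_const_zero]
      rw [pd_lift2 (g := fun z => -(b t z * b t z))
          (fun y => by simp [liftS, liftV, liftB]; try ring)
          ((hBc.mul hBc).neg.differentiable (by simp)) x]
      rw [pd_lift2 (g := fun z => ρ t z * θ t z + (1 / 2) * (b t z) ^ 2)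
          (fun y => by
            simp [liftS, liftB, dot, Fin.sum_univ_three, cons3_zero, cons3_one, cons3_two]
            ring) hPd x]
      ring
  · intro t ht x i
    have hBc := sliceS hb t
    have hU0 := sliceV hu t 0
    have hU1 := sliceV hu t 1
    have key := heq3 t ht (pr x)
    have hdiv2 : divg (fun y i => b t y * u t y i) (pr x)
        = pd 0 (fun z => b t z * u t z 0) (pr x) + pd 1 (fun z => b t z * u t z 1) (pr x) := by
      unfold divg; rw [Fin.sum_univ_two]
    fin_cases i
    · -- i = 0
      show deriv (fun s => liftB b s x 0) t =
          curl (fun y => cross (liftV u t y) (liftB b t y)) x 0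
            + lap (fun y => liftB b t y 0) x
      have hL : (fun s => liftB b s x 0) = fun _ => (0:ℝ) := by
        funext s; simp [liftB]
      rw [hL, deriv_const]
      have hcurl : curl (fun y => cross (liftV u t y) (liftB b t y)) x 0 = 0 := by
        simp only [curl, Matrix.cons_val_zero]
        rw [pd_congr (g := fun _ => (0:ℝ))
              (fun y => by simp [cross, liftV, liftB, cons3_zero, cons3_one, cons3_two]) x,
            pd_const_zero,
            pd_lift2 (g := fun z => -(b t z * u t z 0))
              (fun y => by simp [cross, liftV, liftB, cons3_zero, cons3_one, cons3_two]; ring)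
              ((hBc.mul hU0).neg.differentiable (by simp)) x]
        ring
      have hlap : lap (fun y => liftB b t y 0) x = 0 := by
        rw [lap_congr (g := fun _ => (0:ℝ)) (fun y => by simp [liftB]) x, lap_zero]
      rw [hcurl, hlap]; ring
    · -- i = 1
      show deriv (fun s => liftB b s x 1) t =
          curl (fun y => cross (liftV u t y) (liftB b t y)) x 1
            + lap (fun y => liftB b t y 1) x
      have hL : (fun s => liftB b s x 1) = fun _ => (0:ℝ) := by
        funext s; simp [liftB]
      rw [hL, deriv_const]
      have hcurl : curl (fun y => cross (liftV u t y) (liftB b t y)) x 1 = 0 := by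
        simp only [curl, Matrix.cons_val_one, Matrix.head_cons, Matrix.cons_val_zero]
        rw [pd_lift2 (g := fun z => b t z * u t z 1)
              (fun y => by simp [cross, liftV, liftB, cons3_zero, cons3_one, cons3_two]; ring)
              ((hBc.mul hU1).differentiable (by simp)) x,
            pd_congr (g := fun _ => (0:ℝ))
              (fun y => by simp [cross, liftV, liftB, cons3_zero, cons3_one, cons3_two]) x,
            pd_const_zero]
        ring
      have hlap : lap (fun y => liftB b t y 1) x = 0 := by
        rw [lap_congr (g := fun _ => (0:ℝ)) (fun y => by simp [liftB]) x, lap_zero]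
      rw [hcurl, hlap]; ring
    · -- i = 2
      show deriv (fun s => liftB b s x 2) t =
          curl (fun y => cross (liftV u t y) (liftB b t y)) x 2
            + lap (fun y => liftB b t y 2) x
      have hL : deriv (fun s => liftB b s x 2) t = deriv (fun s => b s (pr x)) t := rfl
      rw [hL]
      have hcurl : curl (fun y => cross (liftV u t y) (liftB b t y)) x 2
          = - (pd 0 (fun z => b t z * u t z 0) (pr x) + pd 1 (fun z => b t z * u t z 1) (pr x)) := by
        simp only [curl, cons3_two]
        rw [pd_lift0 (g := fun z => -(b t z * u t z 0))
              (fun y => by simp [cross, liftV, liftB, cons3_zero, cons3_one, cons3_two]; ring)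
              ((hBc.mul hU0).neg.differentiable (by simp)) x,
            pd_lift1 (g := fun z => b t z * u t z 1)
              (fun y => by simp [cross, liftV, liftB, cons3_zero, cons3_one, cons3_two]; ring)
              ((hBc.mul hU1).differentiable (by simp)) x,
            pd_neg]
        ring
      have hlap : lap (fun y => liftB b t y 2) x = lap (b t) (pr x) := by
        exact lap_lift (fun y => by simp [liftB]) hBc x
      rw [hdiv2] at key
      rw [hcurl, hlap]
      linarith [key]
  · intro t ht x
    have hBc := sliceS hb t
    unfold divg
    rw [Fin.sum_univ_three]
    rw [pd_congr (g := fun _ => (0:ℝ)) (fun y => by simp [liftB]) x, pd_const_zero]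
    rw [pd_congr (g := fun _ => (0:ℝ)) (fun y => by simp [liftB]) x, pd_const_zero]
    rw [pd_lift2 (g := b t) (fun y => by simp [liftB]) (hBc.differentiable (by simp)) x]
    ring
  · intro t ht x
    have hR := sliceS hρ t
    have hBc := sliceS hb t
    have hΘ := sliceS hθ t
    have hU0 := sliceV hu t 0
    have hU1 := sliceV hu t 1
    have key := heq4 t ht (pr x)
    -- 2D expansions in key
    have hdiv2 : divg (fun y i => ρ t y * θ t y * u t y i) (pr x)
        = pd 0 (fun z => ρ t z * θ t z * u t z 0) (pr x)
          + pd 1 (fun z => ρ t z * θ t z * u t z 1) (pr x) := by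
      unfold divg; rw [Fin.sum_univ_two]
    have hdivu2 : divg (u t) (pr x)
        = pd 0 (fun z => u t z 0) (pr x) + pd 1 (fun z => u t z 1) (pr x) := by
      unfold divg; rw [Fin.sum_univ_two]
    have hdot2 : dot (grad (b t) (pr x)) (grad (b t) (pr x))
        = pd 0 (b t) (pr x) * pd 0 (b t) (pr x) + pd 1 (b t) (pr x) * pd 1 (b t) (pr x) := by
      unfold dot grad; rw [Fin.sum_univ_two]
    rw [hdiv2, hdivu2, hdot2] at key
    -- 3D pieces
    have h3div : divg (fun y i => liftS ρ t y * liftS θ t y * liftV u t y i) x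
        = pd 0 (fun z => ρ t z * θ t z * u t z 0) (pr x)
          + pd 1 (fun z => ρ t z * θ t z * u t z 1) (pr x) := by
      unfold divg
      rw [Fin.sum_univ_three]
      rw [pd_lift0 (g := fun z => ρ t z * θ t z * u t z 0)
          (fun y => by simp [liftS, liftV]) (((hR.mul hΘ).mul hU0).differentiable (by simp)) x]
      rw [pd_lift1 (g := fun z => ρ t z * θ t z * u t z 1)
          (fun y => by simp [liftS, liftV]) (((hR.mul hΘ).mul hU1).differentiable (by simp)) x]
      rw [pd_congr (g := fun _ => (0:ℝ)) (fun y => by simp [liftS, liftV]) x, pd_const_zero]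
      ring
    have h3lap : lap (fun y => liftS θ t y) x = lap (θ t) (pr x) :=
      lap_lift (fun y => by simp [liftS]) hΘ x
    have h3divu : divg (liftV u t) x
        = pd 0 (fun z => u t z 0) (pr x) + pd 1 (fun z => u t z 1) (pr x) := by
      unfold divg
      rw [Fin.sum_univ_three]
      rw [pd_lift0 (g := fun z => u t z 0) (fun y => by simp [liftV]) (hU0.differentiable (by simp)) x]
      rw [pd_lift1 (g := fun z => u t z 1) (fun y => by simp [liftV]) (hU1.differentiable (by simp)) x]
      rw [pd_congr (g := fun _ => (0:ℝ)) (fun y => by simp [liftV]) x, pd_const_zero]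
      ring
    have hc0 : curl (liftB b t) x 0 = pd 1 (b t) (pr x) := by
      simp only [curl, Matrix.cons_val_zero]
      rw [pd_lift1 (g := b t) (fun y => by simp [liftB]) (hBc.differentiable (by simp)) x]
      rw [pd_congr (g := fun _ => (0:ℝ)) (fun y => by simp [liftB]) x, pd_const_zero]
      ring
    have hc1 : curl (liftB b t) x 1 = -(pd 0 (b t) (pr x)) := by
      simp only [curl, Matrix.cons_val_one, Matrix.head_cons, Matrix.cons_val_zero]
      rw [pd_lift0 (g := b t) (fun y => by simp [liftB]) (hBc.differentiable (by simp)) x]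
      rw [pd_congr (g := fun _ => (0:ℝ)) (fun y => by simp [liftB]) x, pd_const_zero]
      ring
    have hc2 : curl (liftB b t) x 2 = 0 := by
      simp only [curl, cons3_two]
      rw [pd_congr (g := fun _ => (0:ℝ)) (fun y => by simp [liftB]) x, pd_const_zero]
      rw [pd_congr (g := fun _ => (0:ℝ)) (fun y => by simp [liftB]) x, pd_const_zero]
      ring
    have h3dot : dot (curl (liftB b t) x) (curl (liftB b t) x)
        = pd 0 (b t) (pr x) * pd 0 (b t) (pr x) + pd 1 (b t) (pr x) * pd 1 (b t) (pr x) := by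
      unfold dot
      rw [Fin.sum_univ_three, hc0, hc1, hc2]
      ring
    have hder : deriv (fun s => liftS ρ s x * liftS θ s x) t
        = deriv (fun s => ρ s (pr x) * θ s (pr x)) t := rfl
    rw [hder, h3div, h3lap, h3divu, h3dot]
    show cV * _ = _ - ρ t (pr x) * θ t (pr x) * _ + _
    linarith [key]
end
end
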